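/- arXiv:2303.03051 — 3 statements merged into one kernel-verified Lean document; each statement's English description precedes it below -/
import Mathlib

section
/- Let A, B, C be bounded linear operators on a complex Hilbert space H with A and B positive. If the 2x2 operator matrix [[A, C*],[C, B]] on H ⊕ H is positive, then w(C)^2 ≤ (1/2)‖A‖·‖B‖ + (1/2)w(AB). -/
open ContinuousLinearMap

variable {H : Type*} [NormedAddCommGroup H] [InnerProductSpace ℂ H] [CompleteSpace H]

noncomputable def numRadius (A : H →L[ℂ] H) : ℝ :=
  ⨆ x : {x : H // ‖x‖ = 1}, ‖(inner ℂ (A x) (x : H) : ℂ)‖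

noncomputable def blockOp (A B C : H →L[ℂ] H) : WithLp 2 (H × H) →L[ℂ] WithLp 2 (H × H) :=
  ((WithLp.prodContinuousLinearEquiv 2 ℂ H H).symm : H × H →L[ℂ] WithLp 2 (H × H)) ∘L
    ((A.coprod (adjoint C)).prod (C.coprod B)) ∘L
    ((WithLp.prodContinuousLinearEquiv 2 ℂ H H) : WithLp 2 (H × H) →L[ℂ] H × H)

omit [CompleteSpace H] in
theorem aux_inner_bound (T : H →L[ℂ] H) (x : H) (hx : ‖x‖ = 1) :
    ‖(inner ℂ (T x) (x : H) : ℂ)‖ ≤ ‖T‖ := by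
  calc ‖(inner ℂ (T x) x : ℂ)‖ ≤ ‖T x‖ * ‖x‖ := norm_inner_le_norm _ _
    _ ≤ ‖T‖ * ‖x‖ * ‖x‖ := by gcongr; exact T.le_opNorm x
    _ = ‖T‖ := by rw [hx]; ring

omit [CompleteSpace H] in
theorem aux_bdd (T : H →L[ℂ] H) :
    BddAbove (Set.range fun x : {x : H // ‖x‖ = 1} => ‖(inner ℂ (T x) (x : H) : ℂ)‖) := by
  refine ⟨‖T‖, ?_⟩
  rintro _ ⟨x, rfl⟩
  exact aux_inner_bound T x x.2

omit [CompleteSpace H] in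
theorem le_numRadius (T : H →L[ℂ] H) (x : H) (hx : ‖x‖ = 1) :
    ‖(inner ℂ (T x) (x : H) : ℂ)‖ ≤ numRadius T :=
  le_ciSup (aux_bdd T) ⟨x, hx⟩

omit [CompleteSpace H] in
theorem numRadius_nonneg (T : H →L[ℂ] H) : 0 ≤ numRadius T := by
  rcases isEmpty_or_nonempty {x : H // ‖x‖ = 1} with h | h
  · unfold numRadius
    rw [Real.iSup_of_isEmpty]
  · obtain ⟨x⟩ := h
    exact le_trans (norm_nonneg _) (le_numRadius T x x.2)

omit [CompleteSpace H] in
theorem buzano (e u v : H) (he : ‖e‖ = 1) :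
    ‖(inner ℂ u e * inner ℂ e v : ℂ)‖ ≤ (‖u‖ * ‖v‖ + ‖(inner ℂ u v : ℂ)‖) / 2 := by
  set a : ℂ := inner ℂ e u with ha
  set w : H := (2 * a) • e - u with hw
  have hee : (inner ℂ e e : ℂ) = 1 := by
    rw [inner_self_eq_norm_sq_to_K, he]; norm_num
  have hww : (inner ℂ w w : ℂ) = inner ℂ u u := by
    simp only [hw, inner_sub_left, inner_sub_right, inner_smul_left, inner_smul_right, hee,
      ← ha, ← inner_conj_symm u e, ← ha, map_mul]
    ring_nf
    simp [Complex.conj_ofNat]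
    ring
  have hnw : ‖w‖ = ‖u‖ := by
    have h2 : ‖w‖ ^ 2 = ‖u‖ ^ 2 := by
      have h1 := congrArg (RCLike.re (K := ℂ)) hww
      rwa [inner_self_eq_norm_sq, inner_self_eq_norm_sq] at h1
    calc ‖w‖ = √(‖w‖ ^ 2) := (Real.sqrt_sq (norm_nonneg _)).symm
      _ = √(‖u‖ ^ 2) := by rw [h2]
      _ = ‖u‖ := Real.sqrt_sq (norm_nonneg _)
  have hwv : (inner ℂ w v : ℂ) = 2 * (inner ℂ u e * inner ℂ e v) - inner ℂ u v := by
    simp only [hw, inner_sub_left, inner_smul_left, map_mul, ← inner_conj_symm u e, ← ha]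
    simp [Complex.conj_ofNat]
    ring
  have key : ‖(2 : ℂ) * (inner ℂ u e * inner ℂ e v)‖ ≤ ‖u‖ * ‖v‖ + ‖(inner ℂ u v : ℂ)‖ := by
    calc ‖(2:ℂ) * (inner ℂ u e * inner ℂ e v)‖ = ‖(inner ℂ w v : ℂ) + inner ℂ u v‖ := by rw [hwv]; ring_nf
      _ ≤ ‖(inner ℂ w v : ℂ)‖ + ‖(inner ℂ u v : ℂ)‖ := norm_add_le _ _
      _ ≤ ‖w‖ * ‖v‖ + ‖(inner ℂ u v : ℂ)‖ := by gcongr; exact norm_inner_le_norm _ _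
      _ = ‖u‖ * ‖v‖ + ‖(inner ℂ u v : ℂ)‖ := by rw [hnw]
  rw [norm_mul] at key
  simp only [Complex.norm_ofNat] at key
  linarith

theorem blk_key (A B C : H →L[ℂ] H) (hblk : (blockOp A B C).IsPositive) (x : H)
    (u v : ℂ) :
    (0:ℝ) ≤ (((starRingEnd ℂ) u * u) * inner ℂ (A x) x + (starRingEnd ℂ) v * u * inner ℂ (x : H) (C x)
      + (starRingEnd ℂ) u * v * inner ℂ (C x) x + ((starRingEnd ℂ) v * v) * inner ℂ (B x) x).re := by
  have h := hblk.2 ((WithLp.prodContinuousLinearEquiv 2 ℂ H H).symm (u • x, v • x))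
  rw [reApplyInnerSelf_apply] at h
  simp only [blockOp, coe_comp', Function.comp_apply, ContinuousLinearEquiv.coe_coe,
    ContinuousLinearEquiv.apply_symm_apply, prod_apply, coprod_apply,
    WithLp.prod_inner_apply] at h
  simp only [WithLp.prodContinuousLinearEquiv_symm_apply] at h
  simp only [map_smul, inner_add_left,
    inner_smul_left, inner_smul_right] at h
  rw [adjoint_inner_left] at h
  convert h using 2
  rw [RCLike.re_to_complex]
  ring

theorem csq (A B C : H →L[ℂ] H) (hA : A.IsPositive) (hB : B.IsPositive)
    (hblk : (blockOp A B C).IsPositive) (x : H) :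
    ‖(inner ℂ (C x) x : ℂ)‖ ^ 2 ≤ (inner ℂ (A x) x : ℂ).re * (inner ℂ (B x) x : ℂ).re := by
  set c : ℂ := inner ℂ (C x) x with hc0
  set p : ℝ := (inner ℂ (A x) x : ℂ).re with hp0
  set q : ℝ := (inner ℂ (B x) x : ℂ).re with hq0
  have hp : 0 ≤ p := by
    have := hA.2 x; rwa [reApplyInnerSelf_apply] at this
  have hq : 0 ≤ q := by
    have := hB.2 x; rwa [reApplyInnerSelf_apply] at this
  by_cases hc : c = 0
  · rw [hc]; simpa using mul_nonneg hp hq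
  · have hnc : (0:ℝ) < ‖c‖ := norm_pos_iff.2 hc
    have hquad : ∀ t : ℝ, 0 ≤ p * (t * t) + (-(2 * ‖c‖)) * t + q := by
      intro t
      have h := blk_key A B C hblk x (t : ℂ) (-((starRingEnd ℂ) c) / ‖c‖)
      have e1 : ((starRingEnd ℂ) (t:ℂ) * (t:ℂ)) = ((t*t : ℝ) : ℂ) := by
        rw [Complex.conj_ofReal]; push_cast; ring
      have hcast : ((‖c‖:ℝ):ℂ) ≠ 0 := by exact_mod_cast hnc.ne'
      have hmc : c * (starRingEnd ℂ) c = ((‖c‖:ℂ)) ^ 2 := by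
        rw [Complex.mul_conj, Complex.normSq_eq_norm_sq]
        push_cast; ring
      have e2 : ((starRingEnd ℂ) (-((starRingEnd ℂ) c) / ‖c‖) * (-((starRingEnd ℂ) c) / ‖c‖)) = 1 := by
        rw [map_div₀, map_neg, Complex.conj_conj, Complex.conj_ofReal]
        have : (-c / (‖c‖:ℂ)) * (-((starRingEnd ℂ) c) / (‖c‖:ℂ)) = (c * (starRingEnd ℂ) c) / ((‖c‖:ℂ))^2 := by
          ring
        rw [this, hmc, div_self (pow_ne_zero 2 hcast)]
      have hdd : ((‖c‖:ℂ)) ^ 2 / (‖c‖:ℂ) = (‖c‖:ℂ) := by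
        rw [sq, mul_div_assoc, div_self hcast, mul_one]
      have hxc : (inner ℂ (x : H) (C x) : ℂ) = (starRingEnd ℂ) c := by
        rw [hc0, inner_conj_symm]
      have e3 : (starRingEnd ℂ) (-((starRingEnd ℂ) c) / ‖c‖) * (t:ℂ) * inner ℂ (x : H) (C x)
          = ((-(t * ‖c‖) : ℝ) : ℂ) := by
        rw [map_div₀, map_neg, Complex.conj_conj, Complex.conj_ofReal, hxc]
        have : -c / (‖c‖:ℂ) * (t:ℂ) * (starRingEnd ℂ) c = -((t:ℂ) * ((c * (starRingEnd ℂ) c) / (‖c‖:ℂ))) := by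
          ring
        rw [this, hmc, hdd]
        push_cast; ring
      have e4 : (starRingEnd ℂ) (t:ℂ) * (-((starRingEnd ℂ) c) / ‖c‖) * c = ((-(t * ‖c‖) : ℝ) : ℂ) := by
        rw [Complex.conj_ofReal]
        have : (t:ℂ) * (-((starRingEnd ℂ) c) / (‖c‖:ℂ)) * c = -((t:ℂ) * ((c * (starRingEnd ℂ) c) / (‖c‖:ℂ))) := by
          ring
        rw [this, hmc, hdd]
        push_cast; ring
      rw [e1, e2, e3, e4, one_mul] at h
      simp only [Complex.add_re, Complex.re_ofReal_mul, Complex.ofReal_re] at h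
      rw [← hp0, ← hq0] at h
      linarith
    have hd := discrim_le_zero hquad
    rw [discrim] at hd
    nlinarith [norm_nonneg c]

theorem per_x (A B C : H →L[ℂ] H) (hA : A.IsPositive) (hB : B.IsPositive)
    (hblk : (blockOp A B C).IsPositive) (x : H) (hx : ‖x‖ = 1) :
    ‖(inner ℂ (C x) x : ℂ)‖ ^ 2 ≤ (1 / 2) * ‖A‖ * ‖B‖ + (1 / 2) * numRadius (A * B) := by
  have h1 := csq A B C hA hB hblk x
  set p : ℝ := (inner ℂ (A x) x : ℂ).re with hp0
  set q : ℝ := (inner ℂ (B x) x : ℂ).re with hq0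
  have hp : 0 ≤ p := by have := hA.2 x; rwa [reApplyInnerSelf_apply] at this
  have hq : 0 ≤ q := by have := hB.2 x; rwa [reApplyInnerSelf_apply] at this
  -- A, B self-adjoint so inner ℂ products are real
  have hAr : (inner ℂ (A x) x : ℂ) = (p : ℂ) := by
    have := hA.isSelfAdjoint.isSymmetric.coe_reApplyInnerSelf_apply x
    rw [reApplyInnerSelf_apply] at this
    exact this.symm
  have hBr : (inner ℂ (B x) x : ℂ) = (q : ℂ) := by
    have := hB.isSelfAdjoint.isSymmetric.coe_reApplyInnerSelf_apply x
    rw [reApplyInnerSelf_apply] at this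
    exact this.symm
  have hxB : (inner ℂ (x : H) (B x) : ℂ) = (q : ℂ) := by
    rw [← inner_conj_symm x (B x), hBr, Complex.conj_ofReal]
  have h2 : p * q ≤ (‖A‖ * ‖B‖ + numRadius (A * B)) / 2 := by
    have hb := buzano x (A x) (B x) hx
    rw [hAr, hxB] at hb
    have hval : ‖((p:ℂ)) * ((q:ℂ))‖ = p * q := by
      rw [norm_mul, Complex.norm_real, Complex.norm_real, Real.norm_eq_abs, Real.norm_eq_abs, abs_of_nonneg hp, abs_of_nonneg hq]
    rw [hval] at hb
    have hAB : ‖(inner ℂ (A x) (B x) : ℂ)‖ ≤ numRadius (A * B) := by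
      have hsym : (inner ℂ (A x) (B x) : ℂ) = inner ℂ (x : H) ((A * B) x) :=
        hA.isSelfAdjoint.isSymmetric x (B x)
      have : ‖(inner ℂ (x : H) ((A * B) x) : ℂ)‖ = ‖(inner ℂ ((A * B) x) (x : H) : ℂ)‖ := by
        rw [← inner_conj_symm x ((A * B) x), RCLike.norm_conj]
      rw [hsym, this]
      exact le_numRadius (A * B) x hx
    have hnA : ‖A x‖ ≤ ‖A‖ := by
      have := A.le_opNorm x; rwa [hx, mul_one] at this
    have hnB : ‖B x‖ ≤ ‖B‖ := by
      have := B.le_opNorm x; rwa [hx, mul_one] at this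
    have : ‖A x‖ * ‖B x‖ ≤ ‖A‖ * ‖B‖ := by
      exact mul_le_mul hnA hnB (norm_nonneg _) (norm_nonneg _)
    linarith
  calc ‖(inner ℂ (C x) x : ℂ)‖ ^ 2 ≤ p * q := h1
    _ ≤ (‖A‖ * ‖B‖ + numRadius (A * B)) / 2 := h2
    _ = (1 / 2) * ‖A‖ * ‖B‖ + (1 / 2) * numRadius (A * B) := by ring

theorem stmt1 (A B C : H →L[ℂ] H) (hA : A.IsPositive) (hB : B.IsPositive)
    (hblk : (blockOp A B C).IsPositive) :
    numRadius C ^ 2 ≤ (1 / 2) * ‖A‖ * ‖B‖ + (1 / 2) * numRadius (A * B) := by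
  set M : ℝ := (1 / 2) * ‖A‖ * ‖B‖ + (1 / 2) * numRadius (A * B) with hM
  have hM0 : 0 ≤ M := by
    have := numRadius_nonneg (A * B)
    have h2 : 0 ≤ ‖A‖ * ‖B‖ := mul_nonneg (norm_nonneg _) (norm_nonneg _)
    rw [hM]; nlinarith
  rcases isEmpty_or_nonempty {x : H // ‖x‖ = 1} with h | h
  · have : numRadius C = 0 := by unfold numRadius; rw [Real.iSup_of_isEmpty]
    rw [this]
    simpa using hM0
  · have hle : numRadius C ≤ √M := by
      apply ciSup_le
      intro x
      exact Real.le_sqrt_of_sq_le (per_x A B C hA hB hblk x x.2)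
    calc numRadius C ^ 2 ≤ (√M) ^ 2 := by
          gcongr
          exact numRadius_nonneg C
      _ = M := Real.sq_sqrt hM0
end

section
/- Let A, B, C be bounded linear operators on a complex Hilbert space H with A and B positive. If the 2x2 operator matrix [[A, C*],[C, B]] on H ⊕ H is positive, then for every α ∈ [0,1], w(C)^2 ≤ ‖αA + (1−α)B‖ · ‖A‖^{1−α} · ‖B‖^{α}. -/
open ContinuousLinearMap

variable {H : Type*} [NormedAddCommGroup H] [InnerProductSpace ℂ H] [CompleteSpace H]

private lemma block_eval (A B C : H →L[ℂ] H) (x : H) (μ : ℂ) :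
    RCLike.re (inner ℂ (blockOp A B C ((WithLp.prodContinuousLinearEquiv 2 ℂ H H).symm (x, μ • x)))
        ((WithLp.prodContinuousLinearEquiv 2 ℂ H H).symm (x, μ • x)) : ℂ)
    = RCLike.re (inner ℂ (A x) x : ℂ) + 2 * RCLike.re (μ * (inner ℂ (C x) x : ℂ))
      + ‖μ‖ ^ 2 * RCLike.re (inner ℂ (B x) x : ℂ) := by
  simp [blockOp, WithLp.prod_inner_apply, inner_add_left, inner_smul_right, inner_smul_left,
    adjoint_inner_left, map_smulₛₗ]
  rw [← inner_conj_symm x (C x)]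
  simp only [Complex.conj_re, Complex.conj_im, Complex.sq_norm, Complex.normSq_apply]
  ring

private lemma inner_sq_le (A B C : H →L[ℂ] H) (hblk : (blockOp A B C).IsPositive) (x : H) :
    ‖(inner ℂ (C x) x : ℂ)‖ ^ 2 ≤
      RCLike.re (inner ℂ (A x) x : ℂ) * RCLike.re (inner ℂ (B x) x : ℂ) := by
  set a := RCLike.re (inner ℂ (A x) x : ℂ) with ha
  set b := RCLike.re (inner ℂ (B x) x : ℂ) with hb
  set c : ℂ := inner ℂ (C x) x with hc
  have key : ∀ μ : ℂ, 0 ≤ a + 2 * RCLike.re (μ * c) + ‖μ‖ ^ 2 * b := by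
    intro μ
    have h := hblk.2 ((WithLp.prodContinuousLinearEquiv 2 ℂ H H).symm (x, μ • x))
    rw [reApplyInnerSelf_apply, block_eval A B C x μ] at h
    exact h
  have hq : ∀ t : ℝ, 0 ≤ b * (t * t) + (-(2 * ‖c‖)) * t + a := by
    intro t
    by_cases h0 : c = 0
    · have h := key ((-t : ℝ) : ℂ)
      simp only [h0, mul_zero, map_zero, Complex.norm_real, norm_neg,
        Real.norm_eq_abs, sq_abs] at h
      rw [h0]
      simp only [norm_zero]
      nlinarith [h]
    · set μ : ℂ := ((-t / ‖c‖ : ℝ) : ℂ) * (starRingEnd ℂ) c with hμ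
      have h1 : RCLike.re (μ * c) = -t * ‖c‖ := by
        have : μ * c = ((-t / ‖c‖ : ℝ) : ℂ) * ((‖c‖ : ℝ) : ℂ) ^ 2 := by
          rw [hμ, mul_assoc, RCLike.conj_mul]
          norm_num
        have hcne : (‖c‖ : ℝ) ≠ 0 := norm_ne_zero_iff.mpr h0
        rw [this, ← Complex.ofReal_pow, ← Complex.ofReal_mul]
        simp only [RCLike.re_to_complex, Complex.ofReal_re]
        have hcne2 : ‖c‖ ≠ 0 := hcne
        field_simp
      have h2 : ‖μ‖ ^ 2 = t ^ 2 := by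
        have hcne : (‖c‖ : ℝ) ≠ 0 := norm_ne_zero_iff.mpr h0
        rw [hμ, norm_mul, Complex.norm_real, RCLike.norm_conj, mul_pow,
          Real.norm_eq_abs, sq_abs]
        have hcne2 : ‖c‖ ≠ 0 := hcne
        field_simp
      have h := key μ
      rw [h1, h2] at h
      nlinarith [h]
  have hd := discrim_le_zero hq
  rw [discrim] at hd
  nlinarith [hd, norm_nonneg c]

private lemma re_inner_le (T : H →L[ℂ] H) (x : H) (hx : ‖x‖ = 1) :
    RCLike.re (inner ℂ (T x) x : ℂ) ≤ ‖T‖ := by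
  calc RCLike.re (inner ℂ (T x) x : ℂ) ≤ ‖(inner ℂ (T x) x : ℂ)‖ := RCLike.re_le_norm _
    _ ≤ ‖T x‖ * ‖x‖ := norm_inner_le_norm _ _
    _ ≤ ‖T‖ := by
        have := T.le_opNorm x
        rw [hx] at this ⊢
        simpa using this

theorem stmt3 (A B C : H →L[ℂ] H) (hA : A.IsPositive) (hB : B.IsPositive)
    (hblk : (blockOp A B C).IsPositive) (α : ℝ) (hα : α ∈ Set.Icc (0 : ℝ) 1) :
    numRadius C ^ 2 ≤ ‖(α : ℂ) • A + ((1 - α : ℝ) : ℂ) • B‖ * ‖A‖ ^ (1 - α) * ‖B‖ ^ α := by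
  obtain ⟨hα0, hα1⟩ := hα
  set T := (α : ℂ) • A + ((1 - α : ℝ) : ℂ) • B with hT
  set K := ‖T‖ * ‖A‖ ^ (1 - α) * ‖B‖ ^ α with hK
  have hK0 : 0 ≤ K := by positivity
  have hpt : ∀ x : {x : H // ‖x‖ = 1}, ‖(inner ℂ (C x) (x : H) : ℂ)‖ ≤ Real.sqrt K := by
    rintro ⟨x, hx⟩
    rw [← Real.sqrt_sq (norm_nonneg (_ : ℂ))]
    apply Real.sqrt_le_sqrt
    have h1 := inner_sq_le A B C hblk x
    set a := RCLike.re (inner ℂ (A x) x : ℂ) with ha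
    set b := RCLike.re (inner ℂ (B x) x : ℂ) with hb
    have ha0 : 0 ≤ a := hA.2 x
    have hb0 : 0 ≤ b := hB.2 x
    have haA : a ≤ ‖A‖ := re_inner_le A x hx
    have hbB : b ≤ ‖B‖ := re_inner_le B x hx
    have hTx : α * a + (1 - α) * b ≤ ‖T‖ := by
      have h := re_inner_le T x hx
      have : RCLike.re (inner ℂ (T x) x : ℂ) = α * a + (1 - α) * b := by
        rw [hT]
        simp only [add_apply, smul_apply, inner_add_left, inner_smul_left, map_add, ha, hb]
        simp [Complex.mul_re]
      rwa [this] at h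
    have hab : a * b ≤ (α * a + (1 - α) * b) * (‖A‖ ^ (1 - α) * ‖B‖ ^ α) := by
      rcases eq_or_lt_of_le ha0 with h | hap
      · have h4 : 0 ≤ α * a + (1 - α) * b := by nlinarith
        have h5 : a * b = 0 := by rw [← h, zero_mul]
        rw [h5]
        exact mul_nonneg h4 (by positivity)
      rcases eq_or_lt_of_le hb0 with h | hbp
      · have h4 : 0 ≤ α * a + (1 - α) * b := by nlinarith
        have h5 : a * b = 0 := by rw [← h, mul_zero]
        rw [h5]
        exact mul_nonneg h4 (by positivity)
      have amg : a ^ α * b ^ (1 - α) ≤ α * a + (1 - α) * b :=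
        Real.geom_mean_le_arith_mean2_weighted hα0 (by linarith) ha0 hb0 (by ring)
      have h2 : a ^ (1 - α) ≤ ‖A‖ ^ (1 - α) := Real.rpow_le_rpow ha0 haA (by linarith)
      have h3 : b ^ α ≤ ‖B‖ ^ α := Real.rpow_le_rpow hb0 hbB hα0
      have e1 : a ^ α * a ^ (1 - α) = a := by
        rw [← Real.rpow_add hap]; norm_num
      have e2 : b ^ (1 - α) * b ^ α = b := by
        rw [← Real.rpow_add hbp]; norm_num
      calc a * b = (a ^ α * b ^ (1 - α)) * (a ^ (1 - α) * b ^ α) := by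
            rw [show (a ^ α * b ^ (1 - α)) * (a ^ (1 - α) * b ^ α)
                = (a ^ α * a ^ (1 - α)) * (b ^ (1 - α) * b ^ α) by ring, e1, e2]
        _ ≤ (α * a + (1 - α) * b) * (‖A‖ ^ (1 - α) * ‖B‖ ^ α) := by
            apply mul_le_mul amg
              (mul_le_mul h2 h3 (Real.rpow_nonneg hb0 _) (Real.rpow_nonneg (norm_nonneg A) _))
              (by positivity) (by nlinarith)
    calc ‖(inner ℂ (C x) x : ℂ)‖ ^ 2 ≤ a * b := h1
      _ ≤ (α * a + (1 - α) * b) * (‖A‖ ^ (1 - α) * ‖B‖ ^ α) := hab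
      _ ≤ ‖T‖ * (‖A‖ ^ (1 - α) * ‖B‖ ^ α) := by
          apply mul_le_mul_of_nonneg_right hTx (by positivity)
      _ = K := by rw [hK, mul_assoc]
  have hle : numRadius C ≤ Real.sqrt K := Real.iSup_le hpt (Real.sqrt_nonneg K)
  have h0 : 0 ≤ numRadius C := Real.iSup_nonneg fun x => norm_nonneg _
  calc numRadius C ^ 2 ≤ Real.sqrt K ^ 2 := by gcongr
    _ = K := Real.sq_sqrt hK0
end

section
/- For bounded linear operators B, C on a complex Hilbert space and every α ∈ [0,1], w(BC)^2 ≤ ‖ α|B*|² + (1−α)|C|² ‖ · ‖B‖^{2(1−α)} · ‖C‖^{2α}. -/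
open ContinuousLinearMap

variable {H : Type*} [NormedAddCommGroup H] [InnerProductSpace ℂ H] [CompleteSpace H]

theorem stmt7 (B C : H →L[ℂ] H) (α : ℝ) (hα : α ∈ Set.Icc (0 : ℝ) 1) :
    numRadius (B * C) ^ 2 ≤
      ‖(α : ℂ) • (B * adjoint B) + ((1 - α : ℝ) : ℂ) • (adjoint C * C)‖
        * ‖B‖ ^ (2 * (1 - α)) * ‖C‖ ^ (2 * α) := by
  obtain ⟨hα0, hα1⟩ := hα
  set T := (α : ℂ) • (B * adjoint B) + ((1 - α : ℝ) : ℂ) • (adjoint C * C) with hT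
  have hBpow : (0:ℝ) ≤ ‖B‖ ^ (2 * (1 - α)) := Real.rpow_nonneg (norm_nonneg _) _
  have hCpow : (0:ℝ) ≤ ‖C‖ ^ (2 * α) := Real.rpow_nonneg (norm_nonneg _) _
  set M := ‖T‖ * ‖B‖ ^ (2 * (1 - α)) * ‖C‖ ^ (2 * α) with hM
  have hM0 : 0 ≤ M := mul_nonneg (mul_nonneg (norm_nonneg _) hBpow) hCpow
  have key : ∀ x : H, ‖x‖ = 1 → ‖(inner ℂ ((B * C) x) x : ℂ)‖ ^ 2 ≤ M := by
    intro x hx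
    set a := ‖adjoint B x‖ ^ 2 with ha
    set b := ‖C x‖ ^ 2 with hb
    have ha0 : 0 ≤ a := sq_nonneg _
    have hb0 : 0 ≤ b := sq_nonneg _
    have h1 : ‖(inner ℂ ((B * C) x) x : ℂ)‖ ≤ ‖C x‖ * ‖adjoint B x‖ := by
      have heq : (inner ℂ ((B * C) x) x : ℂ) = inner ℂ (C x) (adjoint B x) := by
        rw [ContinuousLinearMap.mul_apply, ContinuousLinearMap.adjoint_inner_right]
      rw [heq]
      exact norm_inner_le_norm _ _
    have h2 : ‖(inner ℂ ((B * C) x) x : ℂ)‖ ^ 2 ≤ a * b := by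
      calc ‖(inner ℂ ((B * C) x) x : ℂ)‖ ^ 2
          ≤ (‖C x‖ * ‖adjoint B x‖) ^ 2 := pow_le_pow_left₀ (norm_nonneg _) h1 2
        _ = a * b := by rw [ha, hb]; ring
    have h3 : (inner ℂ ((B * adjoint B) x) x : ℂ) = (a : ℂ) := by
      rw [ContinuousLinearMap.mul_apply, ← ContinuousLinearMap.adjoint_inner_right,
        inner_self_eq_norm_sq_to_K, ha]
      norm_cast
    have h4 : (inner ℂ ((adjoint C * C) x) x : ℂ) = (b : ℂ) := by
      rw [ContinuousLinearMap.mul_apply, ContinuousLinearMap.adjoint_inner_left,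
        inner_self_eq_norm_sq_to_K, hb]
      norm_cast
    have h6 : 0 ≤ α * a + (1 - α) * b :=
      add_nonneg (mul_nonneg hα0 ha0) (mul_nonneg (by linarith) hb0)
    have hr : (inner ℂ (T x) x : ℂ) = ((α * a + (1 - α) * b : ℝ) : ℂ) := by
      rw [hT]
      simp only [ContinuousLinearMap.add_apply, ContinuousLinearMap.coe_smul',
        Pi.smul_apply, inner_add_left, inner_smul_left, h3, h4, Complex.conj_ofReal]
      push_cast
      ring
    have hrle : α * a + (1 - α) * b ≤ ‖T‖ := by
      have h5 : ‖(inner ℂ (T x) x : ℂ)‖ ≤ ‖T‖ := by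
        calc ‖(inner ℂ (T x) x : ℂ)‖ ≤ ‖T x‖ * ‖x‖ := norm_inner_le_norm _ _
          _ ≤ (‖T‖ * ‖x‖) * ‖x‖ := by
              exact mul_le_mul_of_nonneg_right (T.le_opNorm x) (norm_nonneg _)
          _ = ‖T‖ := by rw [hx]; ring
      calc α * a + (1 - α) * b = ‖(inner ℂ (T x) x : ℂ)‖ := by
            rw [hr, Complex.norm_real, Real.norm_eq_abs, abs_of_nonneg h6]
        _ ≤ ‖T‖ := h5
    have hgm : a ^ α * b ^ (1 - α) ≤ α * a + (1 - α) * b :=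
      Real.geom_mean_le_arith_mean2_weighted hα0 (by linarith) ha0 hb0 (by ring)
    have haB : a ^ (1 - α) ≤ ‖B‖ ^ (2 * (1 - α)) := by
      have hle : a ≤ ‖B‖ ^ 2 := by
        have h := (adjoint B).le_opNorm x
        rw [hx, mul_one] at h
        calc a = ‖adjoint B x‖ ^ 2 := rfl
          _ ≤ ‖adjoint B‖ ^ 2 := pow_le_pow_left₀ (norm_nonneg _) h 2
          _ = ‖B‖ ^ 2 := by rw [LinearIsometryEquiv.norm_map (adjoint : (H →L[ℂ] H) ≃ₗᵢ⋆[ℂ] (H →L[ℂ] H)) B]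
      calc a ^ (1 - α) ≤ (‖B‖ ^ 2) ^ (1 - α) :=
            Real.rpow_le_rpow ha0 hle (by linarith)
        _ = ‖B‖ ^ (2 * (1 - α)) := by
            rw [← Real.rpow_natCast ‖B‖ 2, ← Real.rpow_mul (norm_nonneg _)]
            norm_num
    have hbC : b ^ α ≤ ‖C‖ ^ (2 * α) := by
      have hle : b ≤ ‖C‖ ^ 2 := by
        have h := C.le_opNorm x
        rw [hx, mul_one] at h
        calc b = ‖C x‖ ^ 2 := rfl
          _ ≤ ‖C‖ ^ 2 := pow_le_pow_left₀ (norm_nonneg _) h 2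
      calc b ^ α ≤ (‖C‖ ^ 2) ^ α := Real.rpow_le_rpow hb0 hle hα0
        _ = ‖C‖ ^ (2 * α) := by
            rw [← Real.rpow_natCast ‖C‖ 2, ← Real.rpow_mul (norm_nonneg _)]
            norm_num
    have hAa : a ^ α * a ^ (1 - α) = a := by
      rw [← Real.rpow_add' ha0 (by norm_num)]
      norm_num
    have hBb : b ^ (1 - α) * b ^ α = b := by
      rw [← Real.rpow_add' hb0 (by norm_num)]
      norm_num
    have hsplit : a * b = (a ^ α * b ^ (1 - α)) * (a ^ (1 - α) * b ^ α) := by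
      have : (a ^ α * b ^ (1 - α)) * (a ^ (1 - α) * b ^ α)
          = (a ^ α * a ^ (1 - α)) * (b ^ (1 - α) * b ^ α) := by ring
      rw [this, hAa, hBb]
    have hab : a * b ≤ (α * a + (1 - α) * b) * (‖B‖ ^ (2 * (1 - α)) * ‖C‖ ^ (2 * α)) := by
      rw [hsplit]
      apply mul_le_mul hgm
      · exact mul_le_mul haB hbC (Real.rpow_nonneg hb0 _) hBpow
      · exact mul_nonneg (Real.rpow_nonneg ha0 _) (Real.rpow_nonneg hb0 _)
      · exact h6
    calc ‖(inner ℂ ((B * C) x) x : ℂ)‖ ^ 2 ≤ a * b := h2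
      _ ≤ (α * a + (1 - α) * b) * (‖B‖ ^ (2 * (1 - α)) * ‖C‖ ^ (2 * α)) := hab
      _ ≤ ‖T‖ * (‖B‖ ^ (2 * (1 - α)) * ‖C‖ ^ (2 * α)) :=
          mul_le_mul_of_nonneg_right hrle (mul_nonneg hBpow hCpow)
      _ = M := by rw [hM]; ring
  have hnr : numRadius (B * C) ≤ Real.sqrt M := by
    apply Real.iSup_le _ (Real.sqrt_nonneg _)
    intro x
    have h := key x x.2
    nlinarith [Real.sq_sqrt hM0, Real.sqrt_nonneg M, norm_nonneg (inner ℂ ((B * C) (x : H)) (x : H) : ℂ)]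
  have h0 : 0 ≤ numRadius (B * C) := Real.iSup_nonneg fun x => norm_nonneg _
  calc numRadius (B * C) ^ 2 ≤ Real.sqrt M ^ 2 := pow_le_pow_left₀ h0 hnr 2
    _ = M := Real.sq_sqrt hM0
end
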